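/- arXiv:2505.02731 — 2 statements merged into one kernel-verified Lean document; each statement's English description precedes it below -/
import Mathlib

section
/- Let V be a nonzero finite-dimensional real inner product space, and let a group G act on V by linear isometries such that the representation is irreducible, i.e. the only G-invariant linear subspaces of V are 0 and V. If A : V → V is a nonzero linear map that is skew-adjoint (⟨A v, w⟩ = −⟨v, A w⟩ for all v, w ∈ V) and G-equivariant (A(g • v) = g • (A v)), then there exists λ > 0 such that A ∘ A = −λ² · id_V; in particular J := λ⁻¹ A satisfies J ∘ J = −id_V. -/
open scoped RealInnerProductSpace

/-- Let `V` be a nonzero finite-dimensional real inner product space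
with an irreducible action of a group `G` by linear isometries.  If `A : V → V` is a
nonzero skew-adjoint `G`-equivariant linear map, then there exists `λ > 0` with
`A ∘ A = -λ² · id`; in particular `J := λ⁻¹ • A` satisfies `J ∘ J = -id`. -/
theorem skewAdjoint_equivariant_sq_neg_scalar
    {V : Type*} [NormedAddCommGroup V] [InnerProductSpace ℝ V]
    [FiniteDimensional ℝ V] [Nontrivial V]
    {G : Type*} [Group G] (ρ : G →* (V ≃ₗᵢ[ℝ] V))
    (hirr : ∀ W : Submodule ℝ V, (∀ (g : G), ∀ v ∈ W, ρ g v ∈ W) → W = ⊥ ∨ W = ⊤)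
    (A : V →ₗ[ℝ] V) (hA : A ≠ 0)
    (hskew : ∀ v w : V, ⟪A v, w⟫ = -⟪v, A w⟫)
    (hequiv : ∀ (g : G) (v : V), A (ρ g v) = ρ g (A v)) :
    ∃ l : ℝ, 0 < l ∧ A ∘ₗ A = (-(l ^ 2)) • LinearMap.id ∧
      (l⁻¹ • A) ∘ₗ (l⁻¹ • A) = -LinearMap.id := by
  set B : V →ₗ[ℝ] V := A ∘ₗ A with hB
  have hBsym : B.IsSymmetric := by
    intro v w
    simp only [hB, LinearMap.comp_apply]
    rw [hskew, hskew v (A w), neg_neg]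
  -- B has an eigenvalue
  obtain ⟨μ, hμ⟩ : ∃ μ : ℝ, Module.End.HasEigenvalue B μ :=
    ⟨_, hBsym.hasEigenvalue_iSup_of_finiteDimensional⟩
  -- the eigenspace is G-invariant
  have hinv : ∀ (g : G), ∀ v ∈ Module.End.eigenspace B μ,
      ρ g v ∈ Module.End.eigenspace B μ := by
    intro g v hv
    rw [Module.End.mem_eigenspace_iff] at hv ⊢
    have : B (ρ g v) = ρ g (B v) := by
      simp only [hB, LinearMap.comp_apply, hequiv]
    rw [this, hv, map_smul]
  have htop : Module.End.eigenspace B μ = ⊤ := by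
    rcases hirr _ hinv with h | h
    · exact absurd h hμ
    · exact h
  have hBall : ∀ v : V, B v = μ • v := by
    intro v
    have : v ∈ Module.End.eigenspace B μ := htop ▸ Submodule.mem_top
    exact Module.End.mem_eigenspace_iff.mp this
  -- μ < 0
  obtain ⟨v, hv⟩ : ∃ v, A v ≠ 0 := by
    by_contra h
    push_neg at h
    exact hA (LinearMap.ext fun v => by simp [h v])
  have hv0 : v ≠ 0 := fun h => hv (by simp [h])
  have key : μ * ‖v‖ ^ 2 = -‖A v‖ ^ 2 := by
    have h1 : ⟪B v, v⟫ = -‖A v‖ ^ 2 := by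
      simp only [hB, LinearMap.comp_apply]
      rw [hskew]
      rw [real_inner_self_eq_norm_sq]
    have h2 : ⟪B v, v⟫ = μ * ‖v‖ ^ 2 := by
      rw [hBall v, real_inner_smul_left, real_inner_self_eq_norm_sq]
    linarith [h1, h2.symm]
  have hμneg : μ < 0 := by
    have h1 : (0:ℝ) < ‖v‖ ^ 2 := pow_pos (norm_pos_iff.mpr hv0) 2
    have h2 : (0:ℝ) < ‖A v‖ ^ 2 := pow_pos (norm_pos_iff.mpr hv) 2
    nlinarith
  refine ⟨Real.sqrt (-μ), Real.sqrt_pos.mpr (by linarith), ?_, ?_⟩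
  · have hsq : Real.sqrt (-μ) ^ 2 = -μ := Real.sq_sqrt (by linarith)
    ext w
    simp only [LinearMap.comp_apply, LinearMap.smul_apply, LinearMap.id_apply]
    rw [hBall w, hsq, neg_neg]
  · have hl : Real.sqrt (-μ) ≠ 0 := ne_of_gt (Real.sqrt_pos.mpr (by linarith))
    have hsq : Real.sqrt (-μ) ^ 2 = -μ := Real.sq_sqrt (by linarith)
    ext w
    simp only [LinearMap.comp_apply, LinearMap.smul_apply, LinearMap.neg_apply,
      LinearMap.id_apply, map_smul]
    rw [← LinearMap.comp_apply A A, ← hB, hBall w, smul_smul, smul_smul]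
    have hms : Real.sqrt (-μ) * Real.sqrt (-μ) = -μ :=
      Real.mul_self_sqrt (by linarith)
    have hco : (Real.sqrt (-μ))⁻¹ * (Real.sqrt (-μ))⁻¹ * μ = -1 := by
      rw [← mul_inv, hms, inv_neg, neg_mul, inv_mul_cancel₀ hμneg.ne]
    rw [hco, neg_one_smul]
end

section
/- Let S^n = {(y, z) ∈ ℝ^n × ℝ : |y|² + z² = 1} be the unit sphere. The map S^n → ℝP^{n+1} sending (y, z) to the line spanned by the vector (z − 1, √2·y, z + 1) ∈ ℝ^{n+2} is well defined (this vector is never zero), injective, and a homeomorphism onto the quadric { [x₀ : x₁ : ⋯ : x_{n+1}] ∈ ℝP^{n+1} : 2·x₀·x_{n+1} + x₁² + ⋯ + x_n² = 0 }. -/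
noncomputable section

/-- The quotient topology on a projectivization. -/
instance projTop {K V : Type*} [DivisionRing K] [AddCommGroup V] [Module K V]
    [TopologicalSpace V] : TopologicalSpace (Projectivization K V) :=
  inferInstanceAs (TopologicalSpace (Quotient (projectivizationSetoid K V)))

/-- The unit sphere `S^n = {(y, z) ∈ ℝ^n × ℝ : |y|² + z² = 1}`. -/
def unitSphere (n : ℕ) : Type :=
  {yz : EuclideanSpace ℝ (Fin n) × ℝ // ‖yz.1‖ ^ 2 + yz.2 ^ 2 = 1}

instance (n : ℕ) : TopologicalSpace (unitSphere n) :=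
  inferInstanceAs (TopologicalSpace
    {yz : EuclideanSpace ℝ (Fin n) × ℝ // ‖yz.1‖ ^ 2 + yz.2 ^ 2 = 1})

/-- The map `S^n → ℝP^{n+1}`, `(y, z) ↦ [z - 1 : √2·y : z + 1]`. -/
def sphereToProj (n : ℕ) (x : unitSphere n) :
    Projectivization ℝ (ℝ × EuclideanSpace ℝ (Fin n) × ℝ) :=
  Projectivization.mk ℝ (x.1.2 - 1, Real.sqrt 2 • x.1.1, x.1.2 + 1) (by
    intro h
    have h1 : x.1.2 - 1 = 0 := congrArg Prod.fst h
    have h3 : x.1.2 + 1 = 0 := congrArg (fun p : ℝ × EuclideanSpace ℝ (Fin n) × ℝ => p.2.2) h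
    linarith)

/-- The quadric `{[x₀ : x₁ : ⋯ : x_{n+1}] ∈ ℝP^{n+1} : 2 x₀ x_{n+1} + x₁² + ⋯ + x_n² = 0}`. -/
def stereoQuadric (n : ℕ) : Set (Projectivization ℝ (ℝ × EuclideanSpace ℝ (Fin n) × ℝ)) :=
  {L | 2 * L.rep.1 * L.rep.2.2 + ∑ i, (L.rep.2.1 i) ^ 2 = 0}

namespace StereoAux

variable {n : ℕ}

abbrev Amb (n : ℕ) : Type := ℝ × EuclideanSpace ℝ (Fin n) × ℝ

/-- The quadratic form. -/
def qform (v : Amb n) : ℝ := 2 * v.1 * v.2.2 + ∑ i, (v.2.1 i) ^ 2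

/-- The (partial) inverse map on vectors. -/
def ghat (v : Amb n) : EuclideanSpace ℝ (Fin n) × ℝ :=
  ((Real.sqrt 2 / (v.2.2 - v.1)) • v.2.1, (v.1 + v.2.2) / (v.2.2 - v.1))

/-- The forward map on vectors. -/
def vec (p : EuclideanSpace ℝ (Fin n) × ℝ) : Amb n :=
  (p.2 - 1, Real.sqrt 2 • p.1, p.2 + 1)

lemma sum_sq (y : EuclideanSpace ℝ (Fin n)) : ∑ i, (y i) ^ 2 = ‖y‖ ^ 2 := by
  rw [EuclideanSpace.norm_eq, Real.sq_sqrt (by positivity)]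
  simp [sq_abs]

lemma qform_vec (p : EuclideanSpace ℝ (Fin n) × ℝ) :
    qform (vec p) = 2 * (‖p.1‖ ^ 2 + p.2 ^ 2 - 1) := by
  have : ∑ i, ((Real.sqrt 2 • p.1 : EuclideanSpace ℝ (Fin n)) i) ^ 2 = 2 * ‖p.1‖ ^ 2 := by
    rw [← sum_sq]
    rw [Finset.mul_sum]
    refine Finset.sum_congr rfl fun i _ => ?_
    have h2 : (Real.sqrt 2) ^ 2 = 2 := Real.sq_sqrt (by norm_num)
    simp only [PiLp.smul_apply, smul_eq_mul]
    ring_nf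
    rw [h2]
    ring
  simp only [qform, vec, this]
  ring

lemma vec_ne_zero (p : EuclideanSpace ℝ (Fin n) × ℝ) (h : ‖p.1‖ ^ 2 + p.2 ^ 2 = 1) :
    vec p ≠ 0 := by
  intro hv
  have h1 : p.2 - 1 = 0 := congrArg Prod.fst hv
  have h3 : p.2 + 1 = 0 := congrArg (fun q : Amb n => q.2.2) hv
  linarith

lemma qform_smul (c : ℝ) (v : Amb n) : qform (c • v) = c ^ 2 * qform v := by
  simp only [qform, Prod.smul_fst, Prod.smul_snd, smul_eq_mul, PiLp.smul_apply]
  have h : ∑ x, (c * v.2.1 x) ^ 2 = c ^ 2 * ∑ x, (v.2.1 x) ^ 2 := by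
    rw [Finset.mul_sum]; exact Finset.sum_congr rfl fun i _ => by ring
  rw [h]; ring

lemma denom_ne (v : Amb n) (h0 : v ≠ 0) (hq : qform v = 0) : v.2.2 - v.1 ≠ 0 := by
  intro hd
  have hba : v.2.2 = v.1 := by linarith [sub_eq_zero.mp hd]
  have hsum : ∑ i, (v.2.1 i) ^ 2 = ‖v.2.1‖ ^ 2 := sum_sq _
  have hq' : 2 * v.1 ^ 2 + ‖v.2.1‖ ^ 2 = 0 := by
    simp only [qform, hba, hsum] at hq ⊢; nlinarith [hq]
  have h1 : v.1 = 0 := by nlinarith [sq_nonneg v.1, norm_nonneg v.2.1, sq_nonneg ‖v.2.1‖]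
  have h2 : ‖v.2.1‖ = 0 := by nlinarith [norm_nonneg v.2.1]
  apply h0
  have : v.2.1 = 0 := norm_eq_zero.mp h2
  have h3 : v.2.2 = 0 := by rw [hba, h1]
  exact Prod.ext h1 (Prod.ext this h3)

lemma ghat_smul (c : ℝ) (hc : c ≠ 0) (v : Amb n) : ghat (c • v) = ghat v := by
  simp only [ghat, Prod.smul_fst, Prod.smul_snd, smul_eq_mul]
  have hd : c * v.2.2 - c * v.1 = c * (v.2.2 - v.1) := by ring
  refine Prod.ext_iff.mpr ⟨?_, ?_⟩ <;> dsimp only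
  · rw [hd, smul_smul]
    congr 1
    rw [div_mul_eq_mul_div, mul_comm (Real.sqrt 2) c, mul_div_mul_left _ _ hc]
  · rw [hd]
    rw [show c * v.1 + c * v.2.2 = c * (v.1 + v.2.2) by ring, mul_div_mul_left _ _ hc]

lemma ghat_vec (p : EuclideanSpace ℝ (Fin n) × ℝ) : ghat (vec p) = p := by
  have h2 : Real.sqrt 2 * Real.sqrt 2 = 2 := Real.mul_self_sqrt (by norm_num)
  simp only [ghat, vec]
  have hd : p.2 + 1 - (p.2 - 1) = 2 := by ring
  rw [hd]
  refine Prod.ext_iff.mpr ⟨?_, ?_⟩ <;> dsimp only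
  · rw [smul_smul]
    have : Real.sqrt 2 / 2 * Real.sqrt 2 = 1 := by
      rw [div_mul_eq_mul_div, h2]; norm_num
    rw [this, one_smul]
  · ring

lemma vec_ghat (v : Amb n) (hd : v.2.2 - v.1 ≠ 0) :
    vec (ghat v) = (2 / (v.2.2 - v.1)) • v := by
  have h2 : Real.sqrt 2 * Real.sqrt 2 = 2 := Real.mul_self_sqrt (by norm_num)
  simp only [vec, ghat, Prod.smul_fst, Prod.smul_snd, smul_eq_mul, smul_smul]
  refine Prod.ext_iff.mpr ⟨?_, Prod.ext_iff.mpr ⟨?_, ?_⟩⟩ <;> dsimp only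
  · rw [Prod.smul_fst, smul_eq_mul]
    field_simp
    ring
  · congr 1
    rw [← mul_div_assoc, h2]
  · rw [Prod.smul_snd, Prod.smul_snd, smul_eq_mul]
    field_simp
    ring

lemma ghat_sphere (v : Amb n) (h0 : v ≠ 0) (hq : qform v = 0) :
    ‖(ghat v).1‖ ^ 2 + (ghat v).2 ^ 2 = 1 := by
  have hd := denom_ne v h0 hq
  have hw : ∑ i, (v.2.1 i) ^ 2 = ‖v.2.1‖ ^ 2 := sum_sq _
  have hq' : 2 * v.1 * v.2.2 + ‖v.2.1‖ ^ 2 = 0 := by rw [← hw]; exact hq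
  have h1 : ‖(ghat v).1‖ ^ 2 = 2 * ‖v.2.1‖ ^ 2 / (v.2.2 - v.1) ^ 2 := by
    simp only [ghat, norm_smul, Real.norm_eq_abs]
    rw [mul_pow, sq_abs, div_pow, Real.sq_sqrt (by norm_num : (0:ℝ) ≤ 2)]
    ring
  rw [h1]
  simp only [ghat]
  rw [div_pow]
  rw [← add_div, div_eq_one_iff_eq (by positivity)]
  nlinarith [hq']

open Projectivization

lemma mem_quadric_iff (L : Projectivization ℝ (Amb n)) :
    L ∈ stereoQuadric n ↔ qform L.rep = 0 := Iff.rfl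

lemma mk_mem_quadric {v : Amb n} (hv : v ≠ 0) :
    Projectivization.mk ℝ v hv ∈ stereoQuadric n ↔ qform v = 0 := by
  obtain ⟨c, hc⟩ := Projectivization.exists_smul_eq_mk_rep ℝ v hv
  rw [mem_quadric_iff, ← hc, Units.smul_def, qform_smul]
  have hc0 : (c : ℝ) ≠ 0 := c.ne_zero
  constructor
  · intro h
    rcases mul_eq_zero.mp h with h | h
    · exact absurd h (pow_ne_zero 2 hc0)
    · exact h
  · intro h; rw [h, mul_zero]

lemma sphereToProj_eq (x : unitSphere n) :
    sphereToProj n x = Projectivization.mk ℝ (vec x.1) (vec_ne_zero x.1 x.2) := rfl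

lemma injective_sphereToProj : Function.Injective (sphereToProj n) := by
  intro x y hxy
  rw [sphereToProj_eq, sphereToProj_eq,
    Projectivization.mk_eq_mk_iff] at hxy
  obtain ⟨a, ha⟩ := hxy
  rw [Units.smul_def] at ha
  have h1 : (a : ℝ) * (y.1.2 - 1) = x.1.2 - 1 := congrArg Prod.fst ha
  have h3 : (a : ℝ) * (y.1.2 + 1) = x.1.2 + 1 :=
    congrArg (fun q : Amb n => q.2.2) ha
  have hA : (a : ℝ) = 1 := by linarith
  have h2 : (a : ℝ) • (Real.sqrt 2 • y.1.1) = Real.sqrt 2 • x.1.1 :=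
    congrArg (fun q : Amb n => q.2.1) ha
  rw [hA, one_smul] at h2
  have hy : y.1.1 = x.1.1 :=
    smul_right_injective _ (by positivity : Real.sqrt 2 ≠ 0) h2
  have hz : y.1.2 = x.1.2 := by rw [hA, one_mul] at h1; linarith
  exact (Subtype.ext (Prod.ext hy hz)).symm

/-- scaling on the subtype of nonzero vectors. -/
def scl (c : ℝˣ) (w : {v : Amb n // v ≠ 0}) : {v : Amb n // v ≠ 0} :=
  ⟨(c : ℝ) • w.1, by simp [smul_eq_zero, c.ne_zero, w.2]⟩

lemma scl_cont (c : ℝˣ) : Continuous (scl (n := n) c) :=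
  Continuous.subtype_mk (by exact (continuous_subtype_val.const_smul (c : ℝ) :
    Continuous fun w : {v : Amb n // v ≠ 0} => (c : ℝ) • w.1)) _

lemma scl_scl (c : ℝˣ) (w : {v : Amb n // v ≠ 0}) : scl c⁻¹ (scl c w) = w := by
  apply Subtype.ext
  show ((c⁻¹ : ℝˣ) : ℝ) • ((c : ℝ) • w.1) = w.1
  rw [smul_smul]
  norm_num

lemma isOpenMap_mk' :
    IsOpenMap (Projectivization.mk' ℝ : {v : Amb n // v ≠ 0} → Projectivization ℝ (Amb n)) := by
  intro U hU
  have hq : Topology.IsQuotientMap (Projectivization.mk' ℝ :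
      {v : Amb n // v ≠ 0} → Projectivization ℝ (Amb n)) :=
    isQuotientMap_quot_mk
  rw [← hq.isOpen_preimage]
  have hpre : Projectivization.mk' ℝ ⁻¹' (Projectivization.mk' ℝ '' U) =
      ⋃ c : ℝˣ, scl c '' U := by
    ext w
    simp only [Set.mem_preimage, Set.mem_image, Set.mem_iUnion]
    constructor
    · rintro ⟨u, hu, huw⟩
      rw [Projectivization.mk'_eq_mk, Projectivization.mk'_eq_mk,
        Projectivization.mk_eq_mk_iff] at huw
      obtain ⟨a, ha⟩ := huw
      rw [Units.smul_def] at ha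
      refine ⟨a⁻¹, u, hu, Subtype.ext ?_⟩
      show ((a⁻¹ : ℝˣ) : ℝ) • u.1 = w.1
      rw [← ha, smul_smul]
      norm_num
    · rintro ⟨c, u, hu, rfl⟩
      refine ⟨u, hu, ?_⟩
      rw [Projectivization.mk'_eq_mk, Projectivization.mk'_eq_mk,
        Projectivization.mk_eq_mk_iff]
      exact ⟨c⁻¹, by
        rw [Units.smul_def]
        show ((c⁻¹ : ℝˣ) : ℝ) • ((c : ℝ) • u.1) = u.1
        rw [smul_smul]; norm_num⟩
  rw [hpre]
  refine isOpen_iUnion fun c => ?_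
  have hli : Function.LeftInverse (scl (n := n) c⁻¹) (scl c) := fun w => scl_scl c w
  have hri : Function.RightInverse (scl (n := n) c⁻¹) (scl c) := fun w => by
    have := scl_scl c⁻¹ w
    rwa [inv_inv] at this
  rw [show scl c '' U = scl c⁻¹ ⁻¹' U from
    congrFun (Set.image_eq_preimage_of_inverse hli hri) U]
  exact hU.preimage (scl_cont _)

lemma cont_sphereToProj : Continuous (sphereToProj n) := by
  have h1 : Continuous (fun x : unitSphere n =>
      (⟨vec x.1, vec_ne_zero x.1 x.2⟩ : {v : Amb n // v ≠ 0})) := by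
    refine Continuous.subtype_mk ?_ _
    have hv : Continuous (fun x : unitSphere n => x.1) := continuous_subtype_val
    exact ((hv.snd.sub continuous_const).prodMk
      ((hv.fst.const_smul (Real.sqrt 2) : Continuous fun x : unitSphere n => Real.sqrt 2 • x.1.1).prodMk (hv.snd.add continuous_const)))
  exact continuous_quot_mk.comp h1

/-- The forward map into the quadric. -/
def fwd (x : unitSphere n) : stereoQuadric n :=
  ⟨sphereToProj n x, by
    rw [sphereToProj_eq, mk_mem_quadric]
    rw [qform_vec, x.2]
    norm_num⟩

/-- The backward map. -/
def bwd (L : stereoQuadric n) : unitSphere n :=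
  ⟨ghat L.1.rep, ghat_sphere _ L.1.rep_nonzero ((mem_quadric_iff L.1).mp L.2)⟩

lemma bwd_fwd (x : unitSphere n) : bwd (fwd x) = x := by
  apply Subtype.ext
  show ghat (sphereToProj n x).rep = x.1
  obtain ⟨c, hc⟩ :=
    Projectivization.exists_smul_eq_mk_rep ℝ (vec x.1) (vec_ne_zero x.1 x.2)
  rw [sphereToProj_eq, ← hc, Units.smul_def, ghat_smul _ c.ne_zero, ghat_vec]

lemma fwd_bwd (L : stereoQuadric n) : fwd (bwd L) = L := by
  apply Subtype.ext
  show sphereToProj n (bwd L) = L.1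
  have h0 := L.1.rep_nonzero
  have hq := (mem_quadric_iff L.1).mp L.2
  have hd := denom_ne L.1.rep h0 hq
  rw [sphereToProj_eq]
  conv_rhs => rw [← L.1.mk_rep]
  rw [Projectivization.mk_eq_mk_iff]
  refine ⟨Units.mk0 (2 / (L.1.rep.2.2 - L.1.rep.1)) (div_ne_zero two_ne_zero hd), ?_⟩
  rw [Units.smul_def]
  exact (vec_ghat L.1.rep hd).symm

lemma cont_fwd : Continuous (fwd (n := n)) :=
  cont_sphereToProj.subtype_mk _

lemma cont_bwd : Continuous (bwd (n := n)) := by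
  rw [continuous_def]
  intro U hU
  obtain ⟨U₀, hU₀o, rfl⟩ := isOpen_induced_iff.mp hU
  set S : Set {v : Amb n // v ≠ 0} :=
    {w | w.1.2.2 - w.1.1 ≠ 0 ∧ ghat w.1 ∈ U₀} with hSdef
  have hval : Continuous (fun w : {v : Amb n // v ≠ 0} => w.1) := continuous_subtype_val
  have hdcont : Continuous (fun w : {v : Amb n // v ≠ 0} => w.1.2.2 - w.1.1) :=
    hval.snd.snd.sub hval.fst
  have hD : IsOpen {w : {v : Amb n // v ≠ 0} | w.1.2.2 - w.1.1 ≠ 0} :=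
    isOpen_ne.preimage hdcont
  have hgcont : ContinuousOn (fun w : {v : Amb n // v ≠ 0} => ghat w.1)
      {w | w.1.2.2 - w.1.1 ≠ 0} := by
    refine ContinuousOn.prodMk ?_ ?_
    · exact (continuousOn_const.div hdcont.continuousOn fun w hw => hw).smul
        hval.snd.fst.continuousOn
    · exact ((hval.fst.add hval.snd.snd).continuousOn).div
        hdcont.continuousOn fun w hw => hw
  have hSopen : IsOpen S := by
    exact hgcont.isOpen_inter_preimage hD hU₀o
  have hW : IsOpen (Projectivization.mk' ℝ '' S) := isOpenMap_mk' S hSopen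
  have hset : (bwd ⁻¹' (Subtype.val ⁻¹' U₀) : Set (stereoQuadric n)) =
      Subtype.val ⁻¹' (Projectivization.mk' ℝ '' S) := by
    ext L
    simp only [Set.mem_preimage, Set.mem_image]
    constructor
    · intro hL
      refine ⟨⟨L.1.rep, L.1.rep_nonzero⟩,
        ⟨denom_ne _ L.1.rep_nonzero ((mem_quadric_iff L.1).mp L.2), hL⟩, ?_⟩
      rw [Projectivization.mk'_eq_mk]
      exact L.1.mk_rep
    · rintro ⟨w, ⟨hwd, hwU⟩, hwL⟩
      rw [← L.1.mk_rep, Projectivization.mk'_eq_mk,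
        Projectivization.mk_eq_mk_iff] at hwL
      obtain ⟨a, ha⟩ := hwL
      rw [Units.smul_def] at ha
      show ghat L.1.rep ∈ U₀
      rw [← ghat_smul (a : ℝ) a.ne_zero L.1.rep, ha]
      exact hwU
  rw [hset]
  exact hW.preimage continuous_subtype_val

/-- The homeomorphism. -/
def sphereHomeo (n : ℕ) : unitSphere n ≃ₜ stereoQuadric n where
  toFun := fwd
  invFun := bwd
  left_inv := bwd_fwd
  right_inv := fwd_bwd
  continuous_toFun := cont_fwd
  continuous_invFun := cont_bwd

end StereoAux

/-- The map `S^n → ℝP^{n+1}`, `(y, z) ↦ [z - 1 : √2·y : z + 1]`, is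
well defined (the vector is never zero), injective, and a homeomorphism onto the
quadric `{[x₀ : ⋯ : x_{n+1}] : 2 x₀ x_{n+1} + x₁² + ⋯ + x_n² = 0}`. -/
theorem sphere_homeo_quadric (n : ℕ) :
    (∀ yz : EuclideanSpace ℝ (Fin n) × ℝ, ‖yz.1‖ ^ 2 + yz.2 ^ 2 = 1 →
      ((yz.2 - 1, Real.sqrt 2 • yz.1, yz.2 + 1) : ℝ × EuclideanSpace ℝ (Fin n) × ℝ) ≠ 0) ∧
    Function.Injective (sphereToProj n) ∧
    ∃ h : unitSphere n ≃ₜ (stereoQuadric n),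
      ∀ x : unitSphere n,
        (h x : Projectivization ℝ (ℝ × EuclideanSpace ℝ (Fin n) × ℝ)) = sphereToProj n x := by
  refine ⟨fun yz h => StereoAux.vec_ne_zero yz h, StereoAux.injective_sphereToProj, ?_⟩
  exact ⟨StereoAux.sphereHomeo n, fun x => rfl⟩

end
end
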